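/- Define M(n,p) = sum over k from 0 to n of S(n,k) * k^p. Then for all nonnegative integers n and p, M(n, p+1) = M(n+1, p) - sum over j from 0 to p of binomial(p,j) * M(n,j). -/
import Mathlib


/-- Stirling numbers of the second kind. -/
def S2 : ℕ → ℕ → ℕ
  | 0, 0 => 1
  | 0, _ + 1 => 0
  | _ + 1, 0 => 0
  | n + 1, k + 1 => (k + 1) * S2 n (k + 1) + S2 n k

/-- `M n p = ∑_(k=0)^n S(n,k) k^p`. -/
def M (n p : ℕ) : ℤ := ∑ k ∈ Finset.range (n + 1), (S2 n k : ℤ) * (k : ℤ) ^ p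

lemma S2_eq_zero : ∀ n k : ℕ, n < k → S2 n k = 0 := by
  intro n
  induction n with
  | zero => intro k hk; cases k with
    | zero => omega
    | succ k => simp [S2]
  | succ n ih =>
    intro k hk
    cases k with
    | zero => omega
    | succ k =>
      simp only [S2]
      rw [ih (k+1) (by omega), ih k (by omega)]
      ring

theorem M_recurrence (n p : ℕ) :
    M n (p + 1) = M (n + 1) p - ∑ j ∈ Finset.range (p + 1), (Nat.choose p j : ℤ) * M n j := by
  have h1 : M (n+1) p = M n (p+1) + ∑ k ∈ Finset.range (n+1), (S2 n k : ℤ) * ((k : ℤ)+1)^p := by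
    rw [M, Finset.sum_range_succ']
    have hA : ∀ k ∈ Finset.range (n+1),
        (S2 (n+1) (k+1) : ℤ) * ((k+1 : ℕ) : ℤ)^p
        = (S2 n (k+1) : ℤ) * ((k:ℤ)+1)^(p+1) + (S2 n k : ℤ) * ((k:ℤ)+1)^p := by
      intro k _
      simp only [S2]
      push_cast
      ring
    rw [Finset.sum_congr rfl hA, Finset.sum_add_distrib]
    simp only [S2, Nat.cast_zero, Nat.cast_ofNat]
    have hM : M n (p+1) = ∑ k ∈ Finset.range (n+1), (S2 n (k+1) : ℤ) * ((k:ℤ)+1)^(p+1) := by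
      have e1 : ∑ k ∈ Finset.range (n+2), (S2 n k : ℤ) * (k:ℤ)^(p+1)
          = ∑ k ∈ Finset.range (n+1), (S2 n (k+1) : ℤ) * ((k:ℤ)+1)^(p+1) := by
        rw [Finset.sum_range_succ']
        push_cast
        simp
      have e2 : ∑ k ∈ Finset.range (n+2), (S2 n k : ℤ) * (k:ℤ)^(p+1)
          = M n (p+1) := by
        rw [show n+2 = (n+1)+1 from rfl, Finset.sum_range_succ,
          S2_eq_zero n (n+1) (by omega), M]
        simp
      rw [← e2, e1]
    rw [hM]
    ring
  have h2 : ∑ k ∈ Finset.range (n+1), (S2 n k : ℤ) * ((k : ℤ)+1)^p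
      = ∑ j ∈ Finset.range (p + 1), (Nat.choose p j : ℤ) * M n j := by
    have hb : ∀ k : ℕ, ((k:ℤ)+1)^p = ∑ j ∈ Finset.range (p+1), (Nat.choose p j : ℤ) * (k:ℤ)^j := by
      intro k
      rw [add_pow]
      exact Finset.sum_congr rfl fun j _ => by ring
    simp only [hb, Finset.mul_sum]
    rw [Finset.sum_comm]
    simp only [M, Finset.mul_sum]
    exact Finset.sum_congr rfl fun j _ => Finset.sum_congr rfl fun k _ => by ring
  rw [h1, h2]
  ring
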